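/- Let p be a prime, let r and m be positive integers, let N ≥ 2^{r+m−1}, and let α be a primitive element of the finite field F_{p^N}. Then the r × m matrix with entry α^{2^{i+j}} in row i and column j, for 0 ≤ i ≤ r−1 and 0 ≤ j ≤ m−1, is superregular. -/

import Mathlib

open Matrix Finset

/-- A matrix over a field is superregular if every minor is nonzero. -/
def Superregular {F : Type*} [Field F] {r ℓ : ℕ} (A : Matrix (Fin r) (Fin ℓ) F) : Prop :=
  ∀ (s : ℕ) (f : Fin s → Fin r) (g : Fin s → Fin ℓ),
    StrictMono f → StrictMono g → (A.submatrix f g).det ≠ 0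

/-! By the Leibniz formula a minor with row indices `a₁ < ⋯ < aₛ` and column indices
`b₁ < ⋯ < bₛ` equals `Q(α)` for `Q = ∑_σ sign σ • X ^ e σ` over `ZMod p`, where
`e σ = ∑ₖ 2 ^ (a_{σ k} + bₖ)`. By the strict rearrangement inequality the identity is the unique
maximiser of `e`, so `Q` is monic of degree `e 1`. That degree is a sum of distinct powers of two
with exponents `aₖ + bₖ < r + m - 1`, hence `< 2 ^ (r + m - 1) ≤ N`. Since `α` generates
`F_{p^N}` over `ZMod p`, its minimal polynomial has degree `N`, so `Q(α) ≠ 0`. -/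

open Polynomial Equiv IntermediateField Module

lemma Equiv.Perm.eq_one_of_monotone {ι : Type*} [LinearOrder ι] [Finite ι] {σ : Perm ι}
    (hσ : Monotone σ) : σ = 1 :=
  have hσ' := hσ.strictMono_of_injective σ.injective
  Equiv.ext fun _ => le_antisymm hσ'.apply_le hσ'.le_apply

lemma sum_comp_perm_mul_lt_sum_mul_of_strictMono {ι R : Type*} [LinearOrder ι] [Fintype ι]
    [Semiring R] [LinearOrder R] [IsStrictOrderedRing R] [ExistsAddOfLE R] {f g : ι → R}
    (hf : StrictMono f) (hg : StrictMono g) {σ : Perm ι} (hσ : σ ≠ 1) :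
    ∑ i, f (σ i) * g i < ∑ i, f i * g i := by
  rw [(hf.monotone.monovary hg.monotone).sum_comp_perm_mul_lt_sum_mul_iff]
  intro hfσ
  have hmono : Monotone (f ∘ σ) := hg.trans_monovary hfσ
  exact hσ (Perm.eq_one_of_monotone fun i j hij => hf.le_iff_le.mp (hmono hij))

lemma sum_two_pow_comp_perm_lt {ι : Type*} [LinearOrder ι] [Fintype ι] {a b : ι → ℕ}
    (ha : StrictMono a) (hb : StrictMono b) {σ : Perm ι} (hσ : σ ≠ 1) :
    ∑ i, 2 ^ (a (σ i) + b i) < ∑ i, 2 ^ (a i + b i) := by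
  simp only [pow_add]
  exact sum_comp_perm_mul_lt_sum_mul_of_strictMono
    ((pow_right_strictMono₀ one_lt_two).comp ha) ((pow_right_strictMono₀ one_lt_two).comp hb) hσ

lemma Nat.sum_pow_lt_pow_of_injective {ι : Type*} [Fintype ι] {m n : ℕ} (hm : 2 ≤ m)
    {c : ι → ℕ} (hc : Function.Injective c) (hcn : ∀ i, c i < n) :
    ∑ i, m ^ c i < m ^ n := by
  rw [← sum_image fun i _ j _ h => hc h]
  exact Nat.geomSum_lt hm fun k hk => by
    obtain ⟨i, -, rfl⟩ := mem_image.mp hk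
    exact hcn i

section ExponentPolynomial

variable {R : Type*} [CommRing R] {n : Type*} [Fintype n] [DecidableEq n]

lemma det_of_pow_eq_aeval {F : Type*} [CommRing F] [Algebra R F] (α : F) (E : n → n → ℕ) :
    (of fun i j => α ^ E i j).det =
      aeval α (∑ σ : Perm n, Perm.sign σ • X ^ ∑ i, E (σ i) i : R[X]) := by
  simp only [det_apply, map_sum, of_apply, prod_pow_eq_pow_sum]
  refine sum_congr rfl fun σ _ => ?_
  rw [Units.smul_def, Units.smul_def, map_zsmul, map_pow, aeval_X]

variable {e : Perm n → ℕ}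

lemma coeff_sum_sign_smul_X_pow (he : ∀ σ ≠ 1, e σ < e 1) :
    (∑ σ : Perm n, Perm.sign σ • X ^ e σ : R[X]).coeff (e 1) = 1 := by
  rw [finsetSum_coeff, sum_eq_single 1]
  · simp
  · intro σ _ hσ
    rw [Units.smul_def, coeff_smul, coeff_X_pow, if_neg (he σ hσ).ne', smul_zero]
  · exact fun h => absurd (mem_univ _) h

lemma natDegree_sum_sign_smul_X_pow_le (he : ∀ σ ≠ 1, e σ < e 1) :
    (∑ σ : Perm n, Perm.sign σ • X ^ e σ : R[X]).natDegree ≤ e 1 := by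
  refine natDegree_sum_le_of_forall_le _ _ fun σ _ => ?_
  refine (natDegree_smul_le _ _).trans ((natDegree_X_pow_le _).trans ?_)
  rcases eq_or_ne σ 1 with rfl | hσ
  · exact le_rfl
  · exact (he σ hσ).le

lemma natDegree_sum_sign_smul_X_pow [Nontrivial R] (he : ∀ σ ≠ 1, e σ < e 1) :
    (∑ σ : Perm n, Perm.sign σ • X ^ e σ : R[X]).natDegree = e 1 :=
  natDegree_eq_of_le_of_coeff_ne_zero (natDegree_sum_sign_smul_X_pow_le he)
    (by rw [coeff_sum_sign_smul_X_pow he]; exact one_ne_zero)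

lemma monic_sum_sign_smul_X_pow [Nontrivial R] (he : ∀ σ ≠ 1, e σ < e 1) :
    (∑ σ : Perm n, Perm.sign σ • X ^ e σ : R[X]).Monic := by
  rw [Monic, leadingCoeff, natDegree_sum_sign_smul_X_pow he, coeff_sum_sign_smul_X_pow he]

end ExponentPolynomial

section PrimitiveElement

variable {K F : Type*} [Field K] [Field F] [Algebra K F]

lemma adjoin_simple_eq_top_of_orderOf_eq [Fintype F] {α : F}
    (hα : orderOf α = Fintype.card F - 1) : K⟮α⟯ = ⊤ := by
  have : NeZero (Fintype.card F - 1) := ⟨by have := Fintype.one_lt_card (α := F); omega⟩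
  refine eq_top_iff.mpr fun x _ => ?_
  rcases eq_or_ne x 0 with rfl | hx
  · exact zero_mem _
  obtain ⟨i, -, rfl⟩ := (hα ▸ IsPrimitiveRoot.orderOf α).eq_pow_of_pow_eq_one
    (FiniteField.pow_card_sub_one_eq_one x hx)
  exact pow_mem (mem_adjoin_simple_self K α) i

lemma aeval_ne_zero_of_natDegree_lt_finrank [FiniteDimensional K F] {α : F} (hα : K⟮α⟯ = ⊤)
    {P : K[X]} (hP : P ≠ 0) (hdeg : P.natDegree < finrank K F) : aeval α P ≠ 0 := fun h => by
  have := natDegree_le_of_dvd (minpoly.dvd K α h) hP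
  rw [(Field.primitive_element_iff_minpoly_natDegree_eq K α).mp hα] at this
  omega

end PrimitiveElement

theorem power_two_exponent_superregular_general {F : Type*} [Field F] [Fintype F]
    {p N : ℕ} (hp : p.Prime) (hcard : Fintype.card F = p ^ N)
    (α : F) (hα : orderOf α = p ^ N - 1)
    {r m : ℕ} (hN : 2 ^ (r + m - 1) ≤ N)
    (A : Matrix (Fin r) (Fin m) F)
    (hA : ∀ i j, A i j = α ^ 2 ^ ((i : ℕ) + (j : ℕ))) :
    Superregular A := by
  have := Fact.mk hp
  have := charP_of_card_eq_prime_pow hcard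
  let := ZMod.algebra F p
  have hfinrank : finrank (ZMod p) F = N :=
    Nat.pow_right_injective hp.two_le (by simp only [FiniteField.pow_finrank_eq_card, hcard])
  have hgen : (ZMod p)⟮α⟯ = ⊤ := adjoin_simple_eq_top_of_orderOf_eq (hcard ▸ hα)
  intro s f g hf hg
  set e : Perm (Fin s) → ℕ := fun σ => ∑ k, 2 ^ ((f (σ k) : ℕ) + g k)
  have he : ∀ σ ≠ 1, e σ < e 1 := fun σ hσ =>
    sum_two_pow_comp_perm_lt (Fin.val_strictMono.comp hf) (Fin.val_strictMono.comp hg) hσ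
  have he1 : e 1 < 2 ^ (r + m - 1) :=
    Nat.sum_pow_lt_pow_of_injective le_rfl
      ((Fin.val_strictMono.comp hf).add (Fin.val_strictMono.comp hg)).injective
      fun k => show (f k : ℕ) + g k < r + m - 1 by have := (f k).isLt; have := (g k).isLt; omega
  have hsub : A.submatrix f g = of fun k l => α ^ 2 ^ ((f k : ℕ) + g l) := by
    ext; simp [hA]
  rw [hsub, det_of_pow_eq_aeval (R := ZMod p)]
  refine aeval_ne_zero_of_natDegree_lt_finrank hgen (monic_sum_sign_smul_X_pow he).ne_zero ?_
  rw [natDegree_sum_sign_smul_X_pow he, hfinrank]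
  exact he1.trans_le hN

/-- For a primitive element `α` of `F_{p^N}` with `N ≥ 2^{r+m-1}`, the `r × m` matrix with
entries `α^{2^{i+j}}` is superregular. -/
theorem power_two_exponent_superregular {F : Type*} [Field F] [Fintype F]
    {p N : ℕ} (hp : p.Prime) (hcard : Fintype.card F = p ^ N)
    (α : F) (hα : orderOf α = p ^ N - 1)
    {r m : ℕ} (hr : 0 < r) (hm : 0 < m) (hN : 2 ^ (r + m - 1) ≤ N)
    (A : Matrix (Fin r) (Fin m) F)
    (hA : ∀ i j, A i j = α ^ 2 ^ ((i : ℕ) + (j : ℕ))) :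
    Superregular A :=
  power_two_exponent_superregular_general hp hcard α hα hN A hA
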